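/- Let 0 < a ≤ b, let n ≥ −1 be an integer, and let f : (0,∞) → ℝ be (n+1) times α-differentiable with D_α^{n+1} f continuous on (0,∞). Then ∫_a^b (D_α^{n+1} f(s)/(n+1)!)·((a^α − s^α)/(λα))^{n+1} dωs = ∫_a^b R_{n,f}(b,s) dωs. -/

import Mathlib

open Real Set MeasureTheory Filter

noncomputable def poch (x y : ℝ) : ℝ := Real.Gamma (x + y) / Real.Gamma x

noncomputable def vlam (γ β ρ δ p q : ℝ) : ℝ :=
  (Real.Gamma β * poch ρ q) / (Real.Gamma (γ + β) * poch δ p)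

/-- Truncated V-fractional derivative `D_α f t = λ t^(1-α) f' t`. -/
noncomputable def Dal (γ β ρ δ p q α : ℝ) (f : ℝ → ℝ) : ℝ → ℝ :=
  fun t => vlam γ β ρ δ p q * t ^ (1 - α) * deriv f t

/-- `f` is `k` times α-differentiable. -/
def alphaDiff (γ β ρ δ p q α : ℝ) (k : ℕ) (f : ℝ → ℝ) : Prop :=
  ∀ j < k, DifferentiableOn ℝ ((Dal γ β ρ δ p q α)^[j] f) (Set.Ioi 0)

/-- V-fractional integral `∫_a^b f dω = λ⁻¹ ∫_a^b f x · x^(α-1) dx`. -/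
noncomputable def VInt (γ β ρ δ p q α : ℝ) (a b : ℝ) (f : ℝ → ℝ) : ℝ :=
  (vlam γ β ρ δ p q)⁻¹ * ∫ x in a..b, f x * x ^ (α - 1)

/-- Truncated V-fractional Taylor remainder with `m` terms; `R_{n,f} = Rtay (n+1)`. -/
noncomputable def Rtay (γ β ρ δ p q α : ℝ) (m : ℕ) (f : ℝ → ℝ) (t s : ℝ) : ℝ :=
  f s - ∑ k ∈ Finset.range m,
    ((Dal γ β ρ δ p q α)^[k] f t / (Nat.factorial k : ℝ)) *
      ((s ^ α - t ^ α) / (vlam γ β ρ δ p q * α)) ^ k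

/-!
Since `D_α g = λ t^(1-α) g'`, we have `g' = D_α g · Φ'` with `Φ t = t^α / (λ α)`, so the
statement is an instance of Taylor's formula with respect to the change of variable `Φ`.
For `F k = D_α^k f`, `w = Φ'` and `P = Φ a - Φ`, the derivative of
`H = ∑_{k<M} F k · P^(k+1) / (k+1)!` telescopes to `(F M · P^M / M! - F 0) · w`, and `H a = 0`;
the Taylor polynomial at `b` times `w` is likewise an exact derivative, and its integral over
`[a, b]` is `-H b`. Both sides therefore equal `∫ F 0 · w + H b`.
-/

open scoped Nat

open Finset in
theorem hasDerivAt_sum_taylor_terms {Φ w : ℝ → ℝ} {F : ℕ → ℝ → ℝ} {M : ℕ} {s : ℝ} (c : ℝ)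
    (hΦ : HasDerivAt Φ (w s) s) (hF : ∀ k < M, HasDerivAt (F k) (F (k + 1) s * w s) s) :
    HasDerivAt (fun t => ∑ k ∈ range M, F k t / (k + 1)! * (c - Φ t) ^ (k + 1))
      (F M s / M ! * (c - Φ s) ^ M * w s - F 0 s * w s) s := by
  have hterm : ∀ k ∈ range M, HasDerivAt (fun t => F k t / (k + 1)! * (c - Φ t) ^ (k + 1))
      (F (k + 1) s / (k + 1)! * (c - Φ s) ^ (k + 1) * w s - F k s / k ! * (c - Φ s) ^ k * w s)
      s := by
    intro k hk
    refine (((hF k (mem_range.mp hk)).div_const _).fun_mul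
      ((hΦ.const_sub c).fun_pow (k + 1))).congr_deriv ?_
    rw [add_tsub_cancel_right, Nat.factorial_succ, Nat.cast_mul]
    field_simp
    ring
  have hsum := HasDerivAt.fun_sum hterm
  rw [sum_range_sub (fun k => F k s / k ! * (c - Φ s) ^ k * w s)] at hsum
  simpa using hsum

open Finset in
theorem hasDerivAt_sum_pow_succ_div_factorial {Φ w : ℝ → ℝ} {s : ℝ} (M : ℕ) (d : ℕ → ℝ)
    (c : ℝ) (hΦ : HasDerivAt Φ (w s) s) :
    HasDerivAt (fun t => ∑ k ∈ range M, d k / (k + 1)! * (Φ t - c) ^ (k + 1))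
      ((∑ k ∈ range M, d k / k ! * (Φ s - c) ^ k) * w s) s := by
  rw [sum_mul]
  refine HasDerivAt.fun_sum fun k _ => ?_
  refine (((hΦ.sub_const c).fun_pow (k + 1)).const_mul _).congr_deriv ?_
  rw [add_tsub_cancel_right, Nat.factorial_succ, Nat.cast_mul]
  field_simp

open Finset intervalIntegral in
theorem integral_mul_pow_eq_integral_sub_taylor_sum_mul {Φ w : ℝ → ℝ} {F : ℕ → ℝ → ℝ} {M : ℕ}
    {a b : ℝ} (hΦ : ∀ s ∈ uIcc a b, HasDerivAt Φ (w s) s) (hw : ContinuousOn w (uIcc a b))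
    (hF : ∀ k < M, ∀ s ∈ uIcc a b, HasDerivAt (F k) (F (k + 1) s * w s) s)
    (hFM : ContinuousOn (F M) (uIcc a b)) :
    ∫ s in a..b, F M s / M ! * (Φ a - Φ s) ^ M * w s =
      ∫ s in a..b, (F 0 s - ∑ k ∈ range M, F k b / k ! * (Φ s - Φ b) ^ k) * w s := by
  have hFc : ∀ k ≤ M, ContinuousOn (F k) (uIcc a b) := fun k hk => by
    rcases hk.lt_or_eq with hk | rfl
    · exact fun s hs => (hF k hk s hs).continuousAt.continuousWithinAt
    · exact hFM
  have hΦc : ContinuousOn Φ (uIcc a b) := fun s hs => (hΦ s hs).continuousAt.continuousWithinAt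
  have hF0w : IntervalIntegrable (fun s => F 0 s * w s) volume a b :=
    ((hFc 0 M.zero_le).mul hw).intervalIntegrable
  have hFMw : IntervalIntegrable (fun s => F M s / M ! * (Φ a - Φ s) ^ M * w s) volume a b := by
    apply ContinuousOn.intervalIntegrable
    fun_prop
  have hTw : IntervalIntegrable
      (fun s => (∑ k ∈ range M, F k b / k ! * (Φ s - Φ b) ^ k) * w s) volume a b := by
    apply ContinuousOn.intervalIntegrable
    fun_prop
  have hlhs := integral_eq_sub_of_hasDerivAt
    (fun s hs => hasDerivAt_sum_taylor_terms (Φ a) (hΦ s hs) fun k hk => hF k hk s hs)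
    (hFMw.sub hF0w)
  have hrhs := integral_eq_sub_of_hasDerivAt
    (fun s hs => hasDerivAt_sum_pow_succ_div_factorial M (fun k => F k b) (Φ b) (hΦ s hs)) hTw
  rw [integral_sub hFMw hF0w] at hlhs
  simp only [sub_mul, integral_sub hF0w hTw]
  simp only [sub_self, ne_eq, Nat.add_one_ne_zero, not_false_eq_true, zero_pow, mul_zero,
    sum_const_zero, sub_zero] at hlhs hrhs
  linarith

theorem poch_pos {x y : ℝ} (hx : 0 < x) (hxy : 0 < x + y) : 0 < poch x y :=
  div_pos (Gamma_pos_of_pos hxy) (Gamma_pos_of_pos hx)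

theorem vlam_pos {γ β ρ δ p q : ℝ} (hβ : 0 < β) (hγβ : 0 < γ + β) (hρ : 0 < ρ) (hρq : 0 < ρ + q)
    (hδ : 0 < δ) (hδp : 0 < δ + p) : 0 < vlam γ β ρ δ p q :=
  div_pos (mul_pos (Gamma_pos_of_pos hβ) (poch_pos hρ hρq))
    (mul_pos (Gamma_pos_of_pos hγβ) (poch_pos hδ hδp))

theorem VInt_eq_integral_mul (γ β ρ δ p q α a b : ℝ) (g : ℝ → ℝ) :
    VInt γ β ρ δ p q α a b g = ∫ x in a..b, g x * (x ^ (α - 1) / vlam γ β ρ δ p q) := by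
  rw [VInt, ← intervalIntegral.integral_const_mul]
  congr 1 with x
  ring

theorem hasDerivAt_Dal {γ β ρ δ p q α s : ℝ} {f : ℝ → ℝ} (hs : 0 < s)
    (hL : vlam γ β ρ δ p q ≠ 0) (hf : DifferentiableAt ℝ f s) :
    HasDerivAt f (Dal γ β ρ δ p q α f s * (s ^ (α - 1) / vlam γ β ρ δ p q)) s := by
  refine hf.hasDerivAt.congr_deriv ?_
  have hpow : s ^ (1 - α) * s ^ (α - 1) = 1 := by
    rw [← rpow_add hs, sub_add_sub_cancel', sub_self, rpow_zero]
  rw [Dal]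
  field_simp
  linear_combination -deriv f s * hpow

theorem hasDerivAt_rpow_div_mul {s α L : ℝ} (hs : s ≠ 0) (hα : α ≠ 0) (hL : L ≠ 0) :
    HasDerivAt (fun t => t ^ α / (L * α)) (s ^ (α - 1) / L) s := by
  refine ((hasDerivAt_rpow_const (Or.inl hs)).div_const _).congr_deriv ?_
  field_simp

theorem stmt5_general (γ β ρ δ p q α : ℝ) (hγ : 0 < γ) (hβ : 0 < β) (hρ : 0 < ρ) (hδ : 0 < δ)
    (hp : 0 < p) (hq : 0 < q) (hα : 0 < α)
    (a b : ℝ) (ha : 0 < a) (hab : a ≤ b)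
    (n : ℤ)
    (f : ℝ → ℝ)
    (hdiff : alphaDiff γ β ρ δ p q α (n + 1).toNat f)
    (hcont : ContinuousOn ((Dal γ β ρ δ p q α)^[(n + 1).toNat] f) (Set.Ioi 0)) :
    VInt γ β ρ δ p q α a b (fun s =>
        ((Dal γ β ρ δ p q α)^[(n + 1).toNat] f s / (Nat.factorial (n + 1).toNat : ℝ)) *
          ((a ^ α - s ^ α) / (vlam γ β ρ δ p q * α)) ^ (n + 1).toNat) =
      VInt γ β ρ δ p q α a b (fun s => Rtay γ β ρ δ p q α (n + 1).toNat f b s) := by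
  have hL : vlam γ β ρ δ p q ≠ 0 :=
    (vlam_pos hβ (by linarith) hρ (by linarith) hδ (by linarith)).ne'
  have hpos : uIcc a b ⊆ Ioi 0 := fun s hs => ha.trans_le (uIcc_of_le hab ▸ hs).1
  have key := integral_mul_pow_eq_integral_sub_taylor_sum_mul
    (Φ := fun t => t ^ α / (vlam γ β ρ δ p q * α)) (F := fun k => (Dal γ β ρ δ p q α)^[k] f)
    (fun s hs => hasDerivAt_rpow_div_mul (hpos hs).ne' hα.ne' hL)
    (fun s hs =>
      ((continuousAt_rpow_const _ _ (Or.inl (hpos hs).ne')).div_const _).continuousWithinAt)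
    (fun k hk s hs => by
      rw [Function.iterate_succ_apply']
      exact hasDerivAt_Dal (hpos hs) hL
        ((hdiff k hk).differentiableAt (Ioi_mem_nhds (hpos hs))))
    (hcont.mono hpos)
  simp only [← sub_div, Function.iterate_zero_apply] at key
  simpa only [VInt_eq_integral_mul, Rtay] using key

theorem stmt5 (γ β ρ δ p q α : ℝ) (hγ : 0 < γ) (hβ : 0 < β) (hρ : 0 < ρ) (hδ : 0 < δ)
    (hp : 0 < p) (hq : 0 < q) (hα : 0 < α) (hα1 : α ≤ 1)
    (a b : ℝ) (ha : 0 < a) (hab : a ≤ b)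
    (n : ℤ) (hn : -1 ≤ n)
    (f : ℝ → ℝ)
    (hdiff : alphaDiff γ β ρ δ p q α (n + 1).toNat f)
    (hcont : ContinuousOn ((Dal γ β ρ δ p q α)^[(n + 1).toNat] f) (Set.Ioi 0)) :
    VInt γ β ρ δ p q α a b (fun s =>
        ((Dal γ β ρ δ p q α)^[(n + 1).toNat] f s / (Nat.factorial (n + 1).toNat : ℝ)) *
          ((a ^ α - s ^ α) / (vlam γ β ρ δ p q * α)) ^ (n + 1).toNat) =
      VInt γ β ρ δ p q α a b (fun s => Rtay γ β ρ δ p q α (n + 1).toNat f b s) :=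
  stmt5_general γ β ρ δ p q α hγ hβ hρ hδ hp hq hα a b ha hab n f hdiff hcont
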